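/- Theorem 5 (leakage-distortion region under log-loss): For the K-round interactive mechanism with log-loss distortion at both agents, the leakage-distortion region is the set of all tuples (L1, L2, D1, D2) satisfying L1 >= I(Y1; U_1,...,U_K, X2), L2 >= I(Y2; U_1,...,U_K, X1), D1 >= H(X1 | U_1,...,U_K, X2), and D2 >= H(X2 | U_1,...,U_K, X1), for some K-round interactive mechanism U_1,...,U_K. In particular, for the posterior reconstruction hatX_i = P(X_i = · | U_1,...,U_K, X_j) (j != i), the expected log-loss E[log(1/hatX_i(X_i))] equals the conditional entropy H(X_i | U_1,...,U_K, X_j). -/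

import Mathlib

/-!
Under log-loss, the expected distortion of a reconstruction `G` of `X1` from `(U^K, X2)` is the
cross-entropy `E[-log G(X1 | U^K, X2)]` (infinite if `G` vanishes at an outcome of positive
probability). Since `log x ≤ x - 1`, it is at least `H(X1 | U^K, X2)` (Gibbs' inequality), with
equality for the posterior `P(X1 | U^K, X2)`; off the support of `(U^K, X2)` any distribution
will do. The leakages do not involve the reconstructions, so the distortion constraints of the
operational region are exactly the conditional-entropy constraints, and symmetrically for `X2`.
-/

open scoped BigOperators

noncomputable section

/-- A probability mass function on a finite type. -/
def IsPMF {α : Type*} [Fintype α] (p : α → ℝ) : Prop :=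
  (∀ a, 0 ≤ p a) ∧ ∑ a, p a = 1

/-- Shannon entropy (natural logarithm). -/
def Hent {α : Type*} [Fintype α] (p : α → ℝ) : ℝ :=
  ∑ a, Real.negMulLog (p a)

open Classical in
/-- Distribution (pushforward) of a random variable `f` under a joint pmf `q`. -/
def pushf {Ω α : Type*} [Fintype Ω] (q : Ω → ℝ) (f : Ω → α) : α → ℝ :=
  fun a => ∑ ω, if f ω = a then q ω else 0

/-- Entropy of a random variable `f` under joint pmf `q`. -/
def HRV {Ω α : Type*} [Fintype Ω] [Fintype α] (q : Ω → ℝ) (f : Ω → α) : ℝ :=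
  Hent (pushf q f)

/-- Mutual information `I(f;g)` under joint pmf `q`. -/
def MIrv {Ω α β : Type*} [Fintype Ω] [Fintype α] [Fintype β]
    (q : Ω → ℝ) (f : Ω → α) (g : Ω → β) : ℝ :=
  HRV q f + HRV q g - HRV q (fun ω => (f ω, g ω))

/-- A `K`-round single-letter interactive mechanism, where the agent observing the first
(public-data) argument sends in rounds `0, 2, 4, …` (`1, 3, 5, …` in 1-based numbering, i.e.
it initiates the interaction) and the agent observing the second argument sends in rounds
`1, 3, 5, …`.  Round `k` produces an output in a finite alphabet `Fin (nU k)`, via a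
conditional probability law that may depend on the sender's public data and on all the
previously exchanged outputs. -/
structure InterMech (K : ℕ) (X1 X2 : Type) where
  nU : Fin K → ℕ
  κ : (k : Fin K) → X1 → X2 → ((j : Fin K) → Fin (nU j)) → Fin (nU k) → ℝ
  nonneg : ∀ k x1 x2 u v, 0 ≤ κ k x1 x2 u v
  sum_one : ∀ k x1 x2 u, ∑ v, κ k x1 x2 u v = 1
  -- the round-`k` conditional law only depends on the outputs of rounds `j < k`
  hist : ∀ (k : Fin K) x1 x2 u u', (∀ j : Fin K, (j : ℕ) < (k : ℕ) → u j = u' j) →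
    κ k x1 x2 u = κ k x1 x2 u'
  -- in even (0-based) rounds the output is generated from `(X1, U_{<k})` only
  firstSends : ∀ (k : Fin K) x1 x2 x2' u, Even (k : ℕ) → κ k x1 x2 u = κ k x1 x2' u
  -- in odd (0-based) rounds the output is generated from `(X2, U_{<k})` only
  secondSends : ∀ (k : Fin K) x1 x1' x2 u, ¬ Even (k : ℕ) → κ k x1 x2 u = κ k x1' x2 u

/-- Joint pmf of `(X1, Y1, X2, Y2, U_1, …, U_K)` for a mechanism initiated at agent A
(who observes `(X1,Y1)`). -/
def mjointA {X1 Y1 X2 Y2 : Type} {K : ℕ}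
    (src : X1 × Y1 × X2 × Y2 → ℝ) (m : InterMech K X1 X2) :
    X1 × Y1 × X2 × Y2 × ((j : Fin K) → Fin (m.nU j)) → ℝ :=
  fun w => src (w.1, w.2.1, w.2.2.1, w.2.2.2.1) *
    ∏ k, m.κ k w.1 w.2.2.1 w.2.2.2.2 (w.2.2.2.2 k)


/-- Conditional entropy `H(f | g)` under joint pmf `q`. -/
def condEntRV {Ω α β : Type*} [Fintype Ω] [Fintype α] [Fintype β]
    (q : Ω → ℝ) (f : Ω → α) (g : Ω → β) : ℝ :=
  HRV q (fun ω => (f ω, g ω)) - HRV q g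

/-- Conditional mutual information `I(f ; g | h)` under joint pmf `q`. -/
def condMIrv {Ω α β γ : Type*} [Fintype Ω] [Fintype α] [Fintype β] [Fintype γ]
    (q : Ω → ℝ) (f : Ω → α) (g : Ω → β) (h : Ω → γ) : ℝ :=
  condEntRV q f h + condEntRV q g h - condEntRV q (fun ω => (f ω, g ω)) h

open scoped ENNReal in
open Classical in
/-- Log-loss distortion: the reproduction `xh` is a probability distribution on the
source alphabet and `d(x, xh) = log (1 / xh x)` (with value `∞` when `xh x = 0`). -/
def dLogLoss {α : Type*} (x : α) (xh : α → ℝ) : ℝ≥0∞ :=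
  if xh x = 0 then ⊤ else ENNReal.ofReal (Real.log (1 / xh x))

/-- The posterior reconstruction `x ↦ P(X1 = x | U^K = u, X2 = x2)` induced by a joint
pmf `q` on `X1 × Y1 × X2 × Y2 × U`. -/
def posterior1 {X1 Y1 X2 Y2 U : Type}
    [Fintype X1] [Fintype Y1] [Fintype X2] [Fintype Y2] [Fintype U]
    (q : X1 × Y1 × X2 × Y2 × U → ℝ) (x2 : X2) (u : U) : X1 → ℝ :=
  fun x1 => pushf q (fun w => (w.1, w.2.2.2.2, w.2.2.1)) (x1, u, x2) /
    pushf q (fun w => (w.2.2.2.2, w.2.2.1)) (u, x2)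

/-- The posterior reconstruction `x ↦ P(X2 = x | U^K = u, X1 = x1)`. -/
def posterior2 {X1 Y1 X2 Y2 U : Type}
    [Fintype X1] [Fintype Y1] [Fintype X2] [Fintype Y2] [Fintype U]
    (q : X1 × Y1 × X2 × Y2 × U → ℝ) (x1 : X1) (u : U) : X2 → ℝ :=
  fun x2 => pushf q (fun w => (w.2.2.1, w.2.2.2.2, w.1)) (x2, u, x1) /
    pushf q (fun w => (w.2.2.2.2, w.1)) (u, x1)

/-- The operational leakage-distortion region of the `K`-round interactive mechanism
under log-loss distortion: tuples `(L1, L2, D1, D2)` for which some `K`-round mechanism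
together with probability-distribution-valued reconstructions meets the expected
log-loss constraints `D1, D2` while leaking at most `L1, L2`. -/
def RegionLogLoss {X1 Y1 X2 Y2 : Type}
    [Fintype X1] [Fintype Y1] [Fintype X2] [Fintype Y2]
    (src : X1 × Y1 × X2 × Y2 → ℝ) (K : ℕ) : Set (ℝ × ℝ × ℝ × ℝ) :=
  { t | 0 ≤ t.2.2.1 ∧ 0 ≤ t.2.2.2 ∧ ∃ (m : InterMech K X1 X2)
      (g1 : X2 → ((j : Fin K) → Fin (m.nU j)) → (X1 → ℝ))
      (g2 : X1 → ((j : Fin K) → Fin (m.nU j)) → (X2 → ℝ)),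
      (∀ x2 u, IsPMF (g1 x2 u)) ∧ (∀ x1 u, IsPMF (g2 x1 u)) ∧
      (∑ w, ENNReal.ofReal (mjointA src m w) * dLogLoss w.1 (g1 w.2.2.1 w.2.2.2.2))
        ≤ ENNReal.ofReal t.2.2.1 ∧
      (∑ w, ENNReal.ofReal (mjointA src m w) * dLogLoss w.2.2.1 (g2 w.1 w.2.2.2.2))
        ≤ ENNReal.ofReal t.2.2.2 ∧
      MIrv (mjointA src m) (fun w => w.2.1) (fun w => (w.2.2.2.2, w.2.2.1)) ≤ t.1 ∧
      MIrv (mjointA src m) (fun w => w.2.2.2.1) (fun w => (w.2.2.2.2, w.1)) ≤ t.2.1 }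

/-- The single-letter characterization of the log-loss region: tuples `(L1, L2, D1, D2)`
satisfying `L1 ≥ I(Y1; U^K, X2)`, `L2 ≥ I(Y2; U^K, X1)`, `D1 ≥ H(X1 | U^K, X2)` and
`D2 ≥ H(X2 | U^K, X1)` for some `K`-round interactive mechanism. -/
def RegionEntropy {X1 Y1 X2 Y2 : Type}
    [Fintype X1] [Fintype Y1] [Fintype X2] [Fintype Y2]
    (src : X1 × Y1 × X2 × Y2 → ℝ) (K : ℕ) : Set (ℝ × ℝ × ℝ × ℝ) :=
  { t | 0 ≤ t.2.2.1 ∧ 0 ≤ t.2.2.2 ∧ ∃ m : InterMech K X1 X2,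
      MIrv (mjointA src m) (fun w => w.2.1) (fun w => (w.2.2.2.2, w.2.2.1)) ≤ t.1 ∧
      MIrv (mjointA src m) (fun w => w.2.2.2.1) (fun w => (w.2.2.2.2, w.1)) ≤ t.2.1 ∧
      condEntRV (mjointA src m) (fun w => w.1) (fun w => (w.2.2.2.2, w.2.2.1)) ≤ t.2.2.1 ∧
      condEntRV (mjointA src m) (fun w => w.2.2.1) (fun w => (w.2.2.2.2, w.1)) ≤ t.2.2.2 }

section Pushforward

variable {Ω α β : Type*} [Fintype Ω] {q : Ω → ℝ}

lemma pushf_nonneg (hq : ∀ w, 0 ≤ q w) (f : Ω → α) (a : α) : 0 ≤ pushf q f a := by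
  classical
  exact Finset.sum_nonneg fun w _ => by split_ifs <;> simp [hq w]

lemma le_pushf_apply (hq : ∀ w, 0 ≤ q w) (f : Ω → α) (w : Ω) : q w ≤ pushf q f (f w) := by
  classical
  have h := Finset.single_le_sum (f := fun ω => if f ω = f w then q ω else 0)
    (fun ω _ => by split_ifs <;> simp [hq ω]) (Finset.mem_univ w)
  simpa [pushf] using h

lemma pushf_apply_pos (hq : ∀ w, 0 ≤ q w) (f : Ω → α) {w : Ω} (hw : 0 < q w) :
    0 < pushf q f (f w) :=
  hw.trans_le (le_pushf_apply hq f w)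

lemma sum_pushf_mul [Fintype α] (q : Ω → ℝ) (f : Ω → α) (F : α → ℝ) :
    ∑ a, pushf q f a * F a = ∑ w, q w * F (f w) := by
  classical
  simp only [pushf, Finset.sum_mul, ite_mul, zero_mul]
  rw [Finset.sum_comm]
  simp

lemma sum_pushf [Fintype α] (q : Ω → ℝ) (f : Ω → α) : ∑ a, pushf q f a = ∑ w, q w := by
  simpa using sum_pushf_mul q f fun _ => 1

lemma sum_pushf_prodMk [Fintype α] (q : Ω → ℝ) (f : Ω → α) (g : Ω → β) (b : β) :
    ∑ a, pushf q (fun w => (f w, g w)) (a, b) = pushf q g b := by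
  classical
  simp only [pushf]
  rw [Finset.sum_comm]
  refine Finset.sum_congr rfl fun w _ => ?_
  simp [Prod.ext_iff, ite_and]

lemma pushf_prodMk_le [Fintype α] (hq : ∀ w, 0 ≤ q w) (f : Ω → α) (g : Ω → β)
    (a : α) (b : β) :
    pushf q (fun w => (f w, g w)) (a, b) ≤ pushf q g b := by
  rw [← sum_pushf_prodMk q f g b]
  exact Finset.single_le_sum (f := fun a' => pushf q (fun w => (f w, g w)) (a', b))
    (fun a' _ => pushf_nonneg hq _ _) (Finset.mem_univ a)

lemma HRV_eq_sum_mul_neg_log [Fintype α] (q : Ω → ℝ) (f : Ω → α) :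
    HRV q f = ∑ w, q w * -Real.log (pushf q f (f w)) := by
  rw [← sum_pushf_mul q f fun a => -Real.log (pushf q f a)]
  simp only [HRV, Hent, Real.negMulLog, neg_mul, mul_neg]

end Pushforward

lemma IsPMF.le_one {α : Type*} [Fintype α] {p : α → ℝ} (hp : IsPMF p) (a : α) : p a ≤ 1 :=
  hp.2 ▸ Finset.single_le_sum (fun a _ => hp.1 a) (Finset.mem_univ a)

/-- The conditional law `P(f = a | g = b)`; it is `0` when `P(g = b) = 0`. -/
def condProb {Ω α β : Type*} [Fintype Ω] (q : Ω → ℝ) (f : Ω → α) (g : Ω → β) (b : β) (a : α) :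
    ℝ :=
  pushf q (fun w => (f w, g w)) (a, b) / pushf q g b

section CondProb

variable {Ω α β : Type*} [Fintype Ω] {q : Ω → ℝ} (f : Ω → α) (g : Ω → β)

lemma condProb_nonneg (hq : ∀ w, 0 ≤ q w) (b : β) (a : α) : 0 ≤ condProb q f g b a :=
  div_nonneg (pushf_nonneg hq _ _) (pushf_nonneg hq _ _)

variable [Fintype α]

lemma condProb_le_one (hq : ∀ w, 0 ≤ q w) (b : β) (a : α) : condProb q f g b a ≤ 1 :=
  div_le_one_of_le₀ (pushf_prodMk_le hq f g a b) (pushf_nonneg hq _ _)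

lemma condProb_pos (hq : ∀ w, 0 ≤ q w) {w : Ω} (hw : 0 < q w) :
    0 < condProb q f g (g w) (f w) := by
  have hjoint := pushf_apply_pos hq (fun w => (f w, g w)) hw
  exact div_pos hjoint (hjoint.trans_le (pushf_prodMk_le hq f g _ _))

lemma isPMF_condProb (hq : ∀ w, 0 ≤ q w) {b : β} (hb : pushf q g b ≠ 0) :
    IsPMF (condProb q f g b) :=
  ⟨condProb_nonneg f g hq b, by
    simp only [condProb]
    rw [← Finset.sum_div, sum_pushf_prodMk, div_self hb]⟩

lemma condEntRV_eq_sum_mul_neg_log_condProb [Fintype β] (hq : ∀ w, 0 ≤ q w) :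
    condEntRV q f g = ∑ w, q w * -Real.log (condProb q f g (g w) (f w)) := by
  rw [condEntRV, HRV_eq_sum_mul_neg_log, HRV_eq_sum_mul_neg_log, ← Finset.sum_sub_distrib]
  refine Finset.sum_congr rfl fun w _ => ?_
  rcases (hq w).eq_or_lt with hw | hw
  · simp [← hw]
  have hjoint := pushf_apply_pos hq (fun w => (f w, g w)) hw
  rw [condProb, Real.log_div hjoint.ne' (pushf_apply_pos hq g hw).ne']
  ring

lemma sum_mul_div_condProb_le [Fintype β] (hq : ∀ w, 0 ≤ q w) (G : β → α → ℝ)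
    (hG : ∀ b, IsPMF (G b)) :
    ∑ w, q w * (G (g w) (f w) / condProb q f g (g w) (f w)) ≤ ∑ w, q w := by
  calc ∑ w, q w * (G (g w) (f w) / condProb q f g (g w) (f w))
      = ∑ c : α × β,
          pushf q (fun w => (f w, g w)) c * (G c.2 c.1 / condProb q f g c.2 c.1) :=
        (sum_pushf_mul q (fun w => (f w, g w)) fun c => G c.2 c.1 / condProb q f g c.2 c.1).symm
    _ ≤ ∑ c : α × β, pushf q g c.2 * G c.2 c.1 := by
        refine Finset.sum_le_sum fun c _ => ?_
        rcases (pushf_nonneg hq (fun w => (f w, g w)) c).eq_or_lt with hc | hc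
        · rw [← hc, zero_mul]
          exact mul_nonneg (pushf_nonneg hq g _) ((hG _).1 _)
        · rw [condProb, div_div_eq_mul_div, mul_div_cancel₀ _ hc.ne', mul_comm]
    _ = ∑ w, q w := by
        rw [Fintype.sum_prod_type_right]
        simp only [← Finset.mul_sum, (hG _).2, mul_one, sum_pushf]

lemma condEntRV_le_sum_mul_neg_log [Fintype β] (hq : ∀ w, 0 ≤ q w) (G : β → α → ℝ)
    (hG : ∀ b, IsPMF (G b)) (hpos : ∀ w, 0 < q w → 0 < G (g w) (f w)) :
    condEntRV q f g ≤ ∑ w, q w * -Real.log (G (g w) (f w)) := by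
  have hterm : ∀ w, q w * -Real.log (condProb q f g (g w) (f w)) ≤
      q w * -Real.log (G (g w) (f w)) +
        (q w * (G (g w) (f w) / condProb q f g (g w) (f w)) - q w) := by
    intro w
    rcases (hq w).eq_or_lt with hw | hw
    · simp [← hw]
    have hπ := condProb_pos f g hq hw
    have hlog := Real.log_le_sub_one_of_pos (div_pos (hpos w hw) hπ)
    rw [Real.log_div (hpos w hw).ne' hπ.ne'] at hlog
    linarith [mul_le_mul_of_nonneg_left hlog hw.le]
  have hsum := Finset.sum_le_sum fun w (_ : w ∈ Finset.univ) => hterm w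
  rw [Finset.sum_add_distrib, Finset.sum_sub_distrib] at hsum
  rw [condEntRV_eq_sum_mul_neg_log_condProb f g hq]
  linarith [sum_mul_div_condProb_le f g hq G hG]

end CondProb

open scoped ENNReal

def expectedLogLoss {Ω α : Type*} [Fintype Ω] (q : Ω → ℝ) (f : Ω → α) (xh : Ω → α → ℝ) :
    ℝ≥0∞ :=
  ∑ w, ENNReal.ofReal (q w) * dLogLoss (f w) (xh w)

section LogLoss

variable {Ω α β : Type*} [Fintype Ω] {q : Ω → ℝ} (f : Ω → α)

lemma expectedLogLoss_eq_ofReal (hq : ∀ w, 0 ≤ q w) (xh : Ω → α → ℝ)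
    (hxh : ∀ w, 0 < q w → 0 < xh w (f w) ∧ xh w (f w) ≤ 1) :
    expectedLogLoss q f xh = ENNReal.ofReal (∑ w, q w * -Real.log (xh w (f w))) := by
  have hnonneg : ∀ w, 0 ≤ q w * -Real.log (xh w (f w)) := by
    intro w
    rcases (hq w).eq_or_lt with hw | hw
    · simp [← hw]
    exact mul_nonneg hw.le (neg_nonneg.2 (Real.log_nonpos (hxh w hw).1.le (hxh w hw).2))
  rw [ENNReal.ofReal_sum_of_nonneg fun w _ => hnonneg w]
  refine Finset.sum_congr rfl fun w _ => ?_
  rcases (hq w).eq_or_lt with hw | hw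
  · simp [← hw]
  rw [dLogLoss, if_neg (hxh w hw).1.ne', one_div, Real.log_inv, ENNReal.ofReal_mul (hq w)]

lemma expectedLogLoss_eq_top {xh : Ω → α → ℝ} {w : Ω} (hw : 0 < q w) (h0 : xh w (f w) = 0) :
    expectedLogLoss q f xh = ⊤ :=
  WithTop.sum_eq_top.2 ⟨w, Finset.mem_univ w, by
    rw [dLogLoss, if_pos h0, ENNReal.mul_top (ENNReal.ofReal_pos.2 hw).ne']
    rfl⟩

lemma expectedLogLoss_congr {xh xh' : Ω → α → ℝ}
    (h : ∀ w, 0 < q w → xh w (f w) = xh' w (f w)) :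
    expectedLogLoss q f xh = expectedLogLoss q f xh' := by
  refine Finset.sum_congr rfl fun w _ => ?_
  by_cases hw : 0 < q w
  · rw [dLogLoss, dLogLoss, h w hw]
  · rw [ENNReal.ofReal_eq_zero.2 (not_lt.1 hw), zero_mul, zero_mul]

variable [Fintype α] [Fintype β] (g : Ω → β)

lemma expectedLogLoss_condProb (hq : ∀ w, 0 ≤ q w) :
    expectedLogLoss q f (fun w => condProb q f g (g w)) = ENNReal.ofReal (condEntRV q f g) := by
  rw [expectedLogLoss_eq_ofReal f hq _ fun w hw =>
    ⟨condProb_pos f g hq hw, condProb_le_one f g hq _ _⟩,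
    condEntRV_eq_sum_mul_neg_log_condProb f g hq]

lemma ofReal_condEntRV_le_expectedLogLoss (hq : ∀ w, 0 ≤ q w) (G : β → α → ℝ)
    (hG : ∀ b, IsPMF (G b)) :
    ENNReal.ofReal (condEntRV q f g) ≤ expectedLogLoss q f (fun w => G (g w)) := by
  by_cases hpos : ∀ w, 0 < q w → 0 < G (g w) (f w)
  · rw [expectedLogLoss_eq_ofReal f hq _ fun w hw => ⟨hpos w hw, ?_⟩]
    · exact ENNReal.ofReal_le_ofReal (condEntRV_le_sum_mul_neg_log f g hq G hG hpos)
    · exact (hG _).le_one _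
  · push Not at hpos
    obtain ⟨w, hw, h0⟩ := hpos
    rw [expectedLogLoss_eq_top f hw (le_antisymm h0 ((hG _).1 _))]
    exact le_top

end LogLoss

open Classical in
/-- Off the support of `g` the conditional law `condProb` vanishes; there it is replaced by the
uniform law. -/
def posteriorOrUniform {Ω α β : Type*} [Fintype Ω] [Fintype α] (q : Ω → ℝ) (f : Ω → α)
    (g : Ω → β) (b : β) : α → ℝ :=
  if pushf q g b = 0 then fun _ => (Fintype.card α : ℝ)⁻¹ else condProb q f g b

section PosteriorOrUniform

variable {Ω α β : Type*} [Fintype Ω] [Fintype α] {q : Ω → ℝ} (f : Ω → α) (g : Ω → β)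

lemma isPMF_posteriorOrUniform [Nonempty α] (hq : ∀ w, 0 ≤ q w) (b : β) :
    IsPMF (posteriorOrUniform q f g b) := by
  unfold posteriorOrUniform
  split_ifs with hb
  · refine ⟨fun _ => by positivity, ?_⟩
    rw [Finset.sum_const, Finset.card_univ, nsmul_eq_mul,
      mul_inv_cancel₀ (Nat.cast_ne_zero.2 Fintype.card_ne_zero)]
  · exact isPMF_condProb f g hq hb

lemma expectedLogLoss_posteriorOrUniform [Fintype β] (hq : ∀ w, 0 ≤ q w) :
    expectedLogLoss q f (fun w => posteriorOrUniform q f g (g w)) =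
      ENNReal.ofReal (condEntRV q f g) := by
  rw [← expectedLogLoss_condProb f g hq]
  refine expectedLogLoss_congr f fun w hw => ?_
  rw [posteriorOrUniform, if_neg (pushf_apply_pos hq g hw).ne']

end PosteriorOrUniform

lemma IsPMF.nonempty {α : Type*} [Fintype α] {p : α → ℝ} (hp : IsPMF p) : Nonempty α := by
  by_contra h
  rw [not_nonempty_iff] at h
  simpa using hp.2

lemma mjointA_nonneg {X1 Y1 X2 Y2 : Type} {K : ℕ} {src : X1 × Y1 × X2 × Y2 → ℝ}
    (hsrc : ∀ x, 0 ≤ src x) (m : InterMech K X1 X2)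
    (w : X1 × Y1 × X2 × Y2 × ((j : Fin K) → Fin (m.nU j))) : 0 ≤ mjointA src m w :=
  mul_nonneg (hsrc _) (Finset.prod_nonneg fun _ _ => m.nonneg _ _ _ _ _)

/-- **Theorem 5 (leakage-distortion region under log-loss).**  The operational log-loss
leakage-distortion region of the `K`-round interactive mechanism coincides with the set
of tuples `(L1, L2, D1, D2)` with `L1 ≥ I(Y1; U^K, X2)`, `L2 ≥ I(Y2; U^K, X1)`,
`D1 ≥ H(X1 | U^K, X2)`, `D2 ≥ H(X2 | U^K, X1)` for some `K`-round mechanism; in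
particular, for the posterior reconstructions the expected log-loss equals the
corresponding conditional entropy. -/
theorem theorem5_logloss_region
    {X1 Y1 X2 Y2 : Type}
    [Fintype X1] [Fintype Y1] [Fintype X2] [Fintype Y2]
    (src : X1 × Y1 × X2 × Y2 → ℝ) (hsrc : IsPMF src) (K : ℕ) :
    RegionLogLoss src K = RegionEntropy src K ∧
    (∀ m : InterMech K X1 X2,
      (∑ w, ENNReal.ofReal (mjointA src m w) *
          dLogLoss w.1 (posterior1 (mjointA src m) w.2.2.1 w.2.2.2.2)) =
        ENNReal.ofReal (condEntRV (mjointA src m)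
          (fun w => w.1) (fun w => (w.2.2.2.2, w.2.2.1))) ∧
      (∑ w, ENNReal.ofReal (mjointA src m w) *
          dLogLoss w.2.2.1 (posterior2 (mjointA src m) w.1 w.2.2.2.2)) =
        ENNReal.ofReal (condEntRV (mjointA src m)
          (fun w => w.2.2.1) (fun w => (w.2.2.2.2, w.1)))) := by
  have hq := mjointA_nonneg (K := K) hsrc.1
  refine ⟨Set.Subset.antisymm ?_ ?_, fun m =>
    ⟨expectedLogLoss_condProb _ _ (hq m), expectedLogLoss_condProb _ _ (hq m)⟩⟩
  · rintro t ⟨hD1, hD2, m, g1, g2, hg1, hg2, hl1, hl2, hM1, hM2⟩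
    refine ⟨hD1, hD2, m, hM1, hM2, ?_, ?_⟩
    · rw [← ENNReal.ofReal_le_ofReal_iff hD1]
      exact (ofReal_condEntRV_le_expectedLogLoss _ _ (hq m) (fun b : _ × X2 => g1 b.2 b.1)
        fun b => hg1 b.2 b.1).trans hl1
    · rw [← ENNReal.ofReal_le_ofReal_iff hD2]
      exact (ofReal_condEntRV_le_expectedLogLoss _ _ (hq m) (fun b : _ × X1 => g2 b.2 b.1)
        fun b => hg2 b.2 b.1).trans hl2
  · rintro t ⟨hD1, hD2, m, hM1, hM2, hC1, hC2⟩
    obtain ⟨x1, -, x2, -⟩ := hsrc.nonempty.some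
    have : Nonempty X1 := ⟨x1⟩
    have : Nonempty X2 := ⟨x2⟩
    exact ⟨hD1, hD2, m,
      fun x2 u => posteriorOrUniform (mjointA src m) (·.1) (fun w => (w.2.2.2.2, w.2.2.1))
        (u, x2),
      fun x1 u => posteriorOrUniform (mjointA src m) (·.2.2.1) (fun w => (w.2.2.2.2, w.1))
        (u, x1),
      fun _ _ => isPMF_posteriorOrUniform _ _ (hq m) _,
      fun _ _ => isPMF_posteriorOrUniform _ _ (hq m) _,
      (expectedLogLoss_posteriorOrUniform _ _ (hq m)).trans_le (ENNReal.ofReal_le_ofReal hC1),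
      (expectedLogLoss_posteriorOrUniform _ _ (hq m)).trans_le (ENNReal.ofReal_le_ofReal hC2),
      hM1, hM2⟩

end
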